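/- arXiv:1504.00086 — 2 statements merged into one kernel-verified Lean document; each statement's English description precedes it below -/
import Mathlib

section
/- Let H be a finite-dimensional real inner product space, B ⊆ H a set of atoms, k > 1 an integer, A the k-simple subset relative to B, and Φ : H → ℝ^m a linear map satisfying ‖Φu‖₂ ≥ α‖u‖ for every u ∈ A, where α > 0. Let x ∈ H be nonzero and let x = ∑_{b∈S} σ_b b be any representation with S ⊆ B finite and σ_b ≥ 0, and set γ = ∑_{b∈S} σ_b. Then ‖Φx‖₂² ≥ α²‖x‖² − (γ/(k−1)) ( ∑_{b∈S} σ_b ‖Φb‖₂² − α² ∑_{b∈S} σ_b ‖b‖² ). -/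
/-!
Maurey's empirical method. Draw `k` atoms independently from `S` with probabilities `σ b / γ`;
their sum lies in the `k`-simple set, so `α² ‖u‖² ≤ ‖Φ u‖²` for every sample `u`. For
independent samples `E ‖∑ᵢ g(tᵢ)‖² = k E ‖g‖² + k (k - 1) ‖E g‖²`, and averaging the sample
inequality with this identity for `g = id` and `g = Φ` gives, after scaling by `γ² / k`,
`α² (γ ∑ σ_b ‖b‖² + (k - 1) ‖x‖²) ≤ γ ∑ σ_b ‖Φ b‖² + (k - 1) ‖Φ x‖²`, which is the claim.
-/

open scoped BigOperators

/-- The `k`-simple subset relative to a set of atoms `B`. -/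
def simpleSet {H : Type*} [AddCommGroup H] [Module ℝ H] (B : Set H) (k : ℕ) : Set H :=
  { x | ∃ (σ : Fin k → ℝ) (b : Fin k → H),
      (∀ i, 0 ≤ σ i) ∧ (∀ i, b i ∈ B) ∧ x = ∑ i, σ i • b i }

open Finset
open scoped InnerProductSpace

section iidExpect

variable {α ι : Type*} [Fintype ι] [DecidableEq ι] (S : Finset α) (μ : α → ℝ)

noncomputable def iidExpect (F : (ι → α) → ℝ) : ℝ :=
  ∑ t ∈ Fintype.piFinset fun _ : ι => S, (∏ l, μ (t l)) * F t

variable {S μ}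

lemma iidExpect_congr {F G : (ι → α) → ℝ} (h : ∀ t : ι → α, (∀ l, t l ∈ S) → F t = G t) :
    iidExpect S μ F = iidExpect S μ G :=
  sum_congr rfl fun t ht => by rw [h t (Fintype.mem_piFinset.mp ht)]

lemma iidExpect_mono (hμ : ∀ b ∈ S, 0 ≤ μ b) {F G : (ι → α) → ℝ}
    (h : ∀ t : ι → α, (∀ l, t l ∈ S) → F t ≤ G t) :
    iidExpect S μ F ≤ iidExpect S μ G := by
  refine sum_le_sum fun t ht => ?_
  rw [Fintype.mem_piFinset] at ht
  exact mul_le_mul_of_nonneg_left (h t ht) (prod_nonneg fun l _ => hμ _ (ht l))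

lemma iidExpect_sum {κ : Type*} (s : Finset κ) (F : κ → (ι → α) → ℝ) :
    iidExpect S μ (fun t => ∑ i ∈ s, F i t) = ∑ i ∈ s, iidExpect S μ (F i) := by
  simp only [iidExpect, mul_sum]
  exact sum_comm

lemma iidExpect_const_mul (c : ℝ) (F : (ι → α) → ℝ) :
    iidExpect S μ (fun t => c * F t) = c * iidExpect S μ F := by
  simp only [iidExpect, mul_sum]
  exact sum_congr rfl fun t _ => by ring

lemma iidExpect_prod (hμ : ∑ b ∈ S, μ b = 1) (s : Finset ι) (f : ι → α → ℝ) :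
    iidExpect S μ (fun t => ∏ l ∈ s, f l (t l)) = ∏ l ∈ s, ∑ b ∈ S, μ b * f l b := by
  have hfactor (l : ι) : ∑ b ∈ S, μ b * (if l ∈ s then f l b else 1)
      = if l ∈ s then ∑ b ∈ S, μ b * f l b else 1 := by
    split_ifs <;> simp [hμ]
  have hsplit (t : ι → α) : ∏ l ∈ s, f l (t l) = ∏ l, if l ∈ s then f l (t l) else 1 := by
    rw [prod_ite_mem, univ_inter]
  calc iidExpect S μ (fun t => ∏ l ∈ s, f l (t l))
      = ∑ t ∈ Fintype.piFinset fun _ : ι => S,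
          ∏ l, μ (t l) * (if l ∈ s then f l (t l) else 1) := by
        simp only [iidExpect, hsplit, prod_mul_distrib]
    _ = ∏ l, if l ∈ s then ∑ b ∈ S, μ b * f l b else 1 := by
        rw [sum_prod_piFinset S fun l b => μ b * (if l ∈ s then f l b else 1)]
        simp only [hfactor]
    _ = ∏ l ∈ s, ∑ b ∈ S, μ b * f l b := by rw [prod_ite_mem, univ_inter]

lemma iidExpect_apply (hμ : ∑ b ∈ S, μ b = 1) (i : ι) (f : α → ℝ) :
    iidExpect S μ (fun t => f (t i)) = ∑ b ∈ S, μ b * f b := by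
  simpa using iidExpect_prod hμ {i} fun _ => f

lemma iidExpect_apply₂ (hμ : ∑ b ∈ S, μ b = 1) {i j : ι} (hij : i ≠ j) (h : α → α → ℝ) :
    iidExpect S μ (fun t => h (t i) (t j)) = ∑ a ∈ S, ∑ b ∈ S, μ a * μ b * h a b := by
  classical
  -- `h (t i) (t j)` is a combination of indicators of `{t i = a, t j = b}`, which are products
  -- over the coordinates `{i, j}`.
  let δ (a b : α) (l : ι) (c : α) : ℝ := if c = (if l = i then a else b) then 1 else 0
  have hδ (a b : α) (t : ι → α) : ∏ l ∈ {i, j}, δ a b l (t l)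
      = (if t i = a then 1 else 0) * (if t j = b then 1 else 0) := by
    simp [δ, prod_pair hij, hij.symm]
  have hdecomp (t : ι → α) (ht : ∀ l, t l ∈ S) :
      h (t i) (t j) = ∑ a ∈ S, ∑ b ∈ S, h a b * ∏ l ∈ {i, j}, δ a b l (t l) := by
    simp [hδ, ht]
  rw [iidExpect_congr hdecomp, iidExpect_sum]
  refine sum_congr rfl fun a ha => ?_
  rw [iidExpect_sum]
  refine sum_congr rfl fun b hb => ?_
  rw [iidExpect_const_mul, iidExpect_prod hμ, prod_pair hij]
  simp only [↓reduceIte, mul_ite, mul_one, mul_zero, sum_ite_eq', ha, hij.symm, hb, δ]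
  ring

end iidExpect

section

variable {α ι E : Type*} [Fintype ι] [DecidableEq ι] [NormedAddCommGroup E]
  [InnerProductSpace ℝ E] {S : Finset α} {μ : α → ℝ}

lemma iidExpect_norm_sum_sq (hμ : ∑ b ∈ S, μ b = 1) (g : α → E) :
    iidExpect S μ (fun t : ι → α => ‖∑ i, g (t i)‖ ^ 2)
      = Fintype.card ι * (∑ b ∈ S, μ b * ‖g b‖ ^ 2
          + (Fintype.card ι - 1) * ‖∑ b ∈ S, μ b • g b‖ ^ 2) := by
  have hinner (i j : ι) : iidExpect S μ (fun t => ⟪g (t i), g (t j)⟫_ℝ)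
      = if i = j then ∑ b ∈ S, μ b * ‖g b‖ ^ 2 else ‖∑ b ∈ S, μ b • g b‖ ^ 2 := by
    split_ifs with hij
    · subst hij
      simp only [real_inner_self_eq_norm_sq]
      exact iidExpect_apply hμ i fun b => ‖g b‖ ^ 2
    · rw [iidExpect_apply₂ hμ hij fun a b => ⟪g a, g b⟫_ℝ, ← real_inner_self_eq_norm_sq, sum_inner]
      simp only [inner_sum, real_inner_smul_left, real_inner_smul_right]
      exact sum_congr rfl fun a _ => sum_congr rfl fun b _ => by ring
  have hrow (i : ι) (A B : ℝ) :
      ∑ j, (if i = j then A else B) = A + (Fintype.card ι - 1) * B := by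
    have hsplit (j : ι) : (if i = j then A else B) = B + if i = j then A - B else 0 := by
      split_ifs <;> ring
    simp only [hsplit, sum_add_distrib, sum_ite_eq, mem_univ, if_true, sum_const, card_univ,
      nsmul_eq_mul]
    ring
  calc iidExpect S μ (fun t : ι → α => ‖∑ i, g (t i)‖ ^ 2)
      = ∑ i, ∑ j, iidExpect S μ (fun t => ⟪g (t i), g (t j)⟫_ℝ) := by
        simp only [← real_inner_self_eq_norm_sq, sum_inner, inner_sum, iidExpect_sum]
        exact sum_comm
    _ = _ := by
        simp only [hinner, hrow, sum_const, card_univ, nsmul_eq_mul]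

end

section

variable {α ι E F : Type*} [Fintype ι] [DecidableEq ι] [Nonempty ι] [NormedAddCommGroup E]
  [InnerProductSpace ℝ E] [NormedAddCommGroup F] [InnerProductSpace ℝ F] {S : Finset α}
  (g : α → E) (g' : α → F) {c : ℝ}

lemma maurey_averaging {μ : α → ℝ} (hμ0 : ∀ b ∈ S, 0 ≤ μ b) (hμ : ∑ b ∈ S, μ b = 1)
    (h : ∀ t : ι → α, (∀ i, t i ∈ S) → c * ‖∑ i, g (t i)‖ ^ 2 ≤ ‖∑ i, g' (t i)‖ ^ 2) :
    c * (∑ b ∈ S, μ b * ‖g b‖ ^ 2 + (Fintype.card ι - 1) * ‖∑ b ∈ S, μ b • g b‖ ^ 2)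
      ≤ ∑ b ∈ S, μ b * ‖g' b‖ ^ 2 + (Fintype.card ι - 1) * ‖∑ b ∈ S, μ b • g' b‖ ^ 2 := by
  have hmean := iidExpect_mono hμ0 h
  rw [iidExpect_const_mul, iidExpect_norm_sum_sq hμ, iidExpect_norm_sum_sq hμ,
    mul_left_comm] at hmean
  exact le_of_mul_le_mul_left hmean (by exact_mod_cast Fintype.card_pos)

lemma maurey_averaging_of_nonneg {σ : α → ℝ} (hσ : ∀ b ∈ S, 0 ≤ σ b)
    (h : ∀ t : ι → α, (∀ i, t i ∈ S) → c * ‖∑ i, g (t i)‖ ^ 2 ≤ ‖∑ i, g' (t i)‖ ^ 2) :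
    c * ((∑ b ∈ S, σ b) * ∑ b ∈ S, σ b * ‖g b‖ ^ 2
        + (Fintype.card ι - 1) * ‖∑ b ∈ S, σ b • g b‖ ^ 2)
      ≤ (∑ b ∈ S, σ b) * ∑ b ∈ S, σ b * ‖g' b‖ ^ 2
        + (Fintype.card ι - 1) * ‖∑ b ∈ S, σ b • g' b‖ ^ 2 := by
  rcases (sum_nonneg hσ).eq_or_lt with hγ | hγ
  · have hzero : ∀ b ∈ S, σ b = 0 := (sum_eq_zero_iff_of_nonneg hσ).mp hγ.symm
    simp +contextual [hzero]
  · set γ := ∑ b ∈ S, σ b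
    have hμ : ∑ b ∈ S, σ b / γ = 1 := by rw [← sum_div, div_self hγ.ne']
    have := maurey_averaging g g' (fun b hb => div_nonneg (hσ b hb) hγ.le) hμ h
    simp only [div_eq_inv_mul, mul_assoc, ← mul_sum, mul_smul, ← smul_sum, norm_smul, mul_pow,
      Real.norm_eq_abs, sq_abs] at this
    have hscale (P X : ℝ) : γ ^ 2 * (γ⁻¹ * P + (Fintype.card ι - 1) * (γ⁻¹ ^ 2 * X))
        = γ * P + (Fintype.card ι - 1) * X := by
      field_simp
    rw [← hscale, ← hscale, mul_left_comm]
    exact mul_le_mul_of_nonneg_left this (sq_nonneg γ)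

end

lemma sum_mem_simpleSet {H : Type*} [AddCommGroup H] [Module ℝ H] {B : Set H} {k : ℕ}
    {b : Fin k → H} (hb : ∀ i, b i ∈ B) : ∑ i, b i ∈ simpleSet B k :=
  ⟨fun _ => 1, b, fun _ => zero_le_one, hb, by simp⟩

theorem maurey_inequality_general
    {H : Type*} [NormedAddCommGroup H] [InnerProductSpace ℝ H]
    {m : ℕ} (B : Set H) (k : ℕ) (hk : 1 < k) (α : ℝ) (hα : 0 < α)
    (Φ : H →ₗ[ℝ] EuclideanSpace ℝ (Fin m))
    (hRIPa : ∀ u ∈ simpleSet B k, α * ‖u‖ ≤ ‖Φ u‖)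
    (x : H)
    (S : Finset H) (σ : H → ℝ) (hSB : ↑S ⊆ B) (hσ : ∀ b ∈ S, 0 ≤ σ b)
    (hrep : x = ∑ b ∈ S, σ b • b) :
    α ^ 2 * ‖x‖ ^ 2 - ((∑ b ∈ S, σ b) / ((k : ℝ) - 1)) *
        ((∑ b ∈ S, σ b * ‖Φ b‖ ^ 2) - α ^ 2 * ∑ b ∈ S, σ b * ‖b‖ ^ 2)
      ≤ ‖Φ x‖ ^ 2 := by
  have hk1 : (0 : ℝ) < k - 1 := by rw [sub_pos]; exact_mod_cast hk
  have : Nonempty (Fin k) := ⟨⟨0, by omega⟩⟩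
  have hsample (t : Fin k → H) (ht : ∀ i, t i ∈ S) :
      α ^ 2 * ‖∑ i, t i‖ ^ 2 ≤ ‖∑ i, Φ (t i)‖ ^ 2 := by
    rw [← map_sum, ← mul_pow]
    exact pow_le_pow_left₀ (by positivity) (hRIPa _ (sum_mem_simpleSet fun i => hSB (ht i))) 2
  have hmaurey := maurey_averaging_of_nonneg (fun b => b) Φ hσ hsample
  simp only [Fintype.card_fin, ← map_smul, ← map_sum, ← hrep] at hmaurey
  have hdiff : α ^ 2 * ‖x‖ ^ 2 - ‖Φ x‖ ^ 2 ≤ ((∑ b ∈ S, σ b) / ((k : ℝ) - 1)) *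
      ((∑ b ∈ S, σ b * ‖Φ b‖ ^ 2) - α ^ 2 * ∑ b ∈ S, σ b * ‖b‖ ^ 2) := by
    rw [div_mul_eq_mul_div, le_div_iff₀ hk1]
    linarith
  linarith

/-- The key Maurey-type inequality (Step 1 of the proof of the main theorem). -/
theorem maurey_inequality
    {H : Type*} [NormedAddCommGroup H] [InnerProductSpace ℝ H] [FiniteDimensional ℝ H]
    {m : ℕ} (B : Set H) (k : ℕ) (hk : 1 < k) (α : ℝ) (hα : 0 < α)
    (Φ : H →ₗ[ℝ] EuclideanSpace ℝ (Fin m))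
    (hRIPa : ∀ u ∈ simpleSet B k, α * ‖u‖ ≤ ‖Φ u‖)
    (x : H) (hx : x ≠ 0)
    (S : Finset H) (σ : H → ℝ) (hSB : ↑S ⊆ B) (hσ : ∀ b ∈ S, 0 ≤ σ b)
    (hrep : x = ∑ b ∈ S, σ b • b) :
    α ^ 2 * ‖x‖ ^ 2 - ((∑ b ∈ S, σ b) / ((k : ℝ) - 1)) *
        ((∑ b ∈ S, σ b * ‖Φ b‖ ^ 2) - α ^ 2 * ∑ b ∈ S, σ b * ‖b‖ ^ 2)
      ≤ ‖Φ x‖ ^ 2 :=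
  maurey_inequality_general B k hk α hα Φ hRIPa x S σ hSB hσ hrep
end

section
/- Let H be a finite-dimensional real inner product space, B a set of unit-norm atoms that is centrally symmetric and spanning, k > 1 an integer, A the k-simple subset relative to B, and suppose (H, A, ‖·‖_B) is a compressed sensing space with bound L > 0. Let Φ : H → ℝ^m be a linear map having the (k, α, β)-generalized-weaken-RIP for distortions α, β > 0 with α ≤ β. Fix λ > 0, σ > 0, and ρ with √((β² − α²)/(α²(k−1))) < ρ < 1/(2L). Let x♮ ∈ H and w ∈ ℝ^m satisfy ‖Φᵀw‖_⋄ ≤ λσ, where Φᵀ is the adjoint of Φ. Then any minimizer x* of ‖x‖_B subject to ‖Φᵀ(Φx − (Φx♮ + w))‖_⋄ ≤ λσ satisfies, for every a ∈ A, ‖x* − x♮‖ ≤ C₄ ‖x♮ − a‖_B + C₅ σ, where C₄ = (1/(2ρ) − L)^{−1}, C₅ = 2λ/(α̃²ρ), and α̃² = α² − (β² − α²)/(ρ²(k−1)). -/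
open scoped BigOperators RealInnerProductSpace

/-- The atom norm induced by a set of atoms `B`. -/
noncomputable def atomNorm {H : Type*} [AddCommGroup H] [Module ℝ H] (B : Set H) (x : H) : ℝ :=
  sInf { r : ℝ | ∃ (S : Finset H) (σ : H → ℝ), ↑S ⊆ B ∧ (∀ b ∈ S, 0 ≤ σ b) ∧
    x = ∑ b ∈ S, σ b • b ∧ r = ∑ b ∈ S, σ b }

/-- `B` spans `H` via finite nonnegative combinations. -/
def Spans {H : Type*} [AddCommGroup H] [Module ℝ H] (B : Set H) : Prop :=
  ∀ x : H, ∃ (S : Finset H) (σ : H → ℝ), ↑S ⊆ B ∧ (∀ b ∈ S, 0 ≤ σ b) ∧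
    x = ∑ b ∈ S, σ b • b

/-- `(H, A, ‖·‖_B)` is a compressed sensing space with bound `L`. -/
def IsCSSpace {H : Type*} [NormedAddCommGroup H] [InnerProductSpace ℝ H]
    (B A : Set H) (L : ℝ) : Prop :=
  (0 : H) ∈ A ∧ ∀ a ∈ A, ∀ v : H, ∃ z₁ z₂ : H, v = z₁ + z₂ ∧
    atomNorm B (a + z₁) = atomNorm B a + atomNorm B z₁ ∧ atomNorm B z₂ ≤ L * ‖v‖

/-- The dual norm of the atom norm. -/
noncomputable def dualNorm {H : Type*} [NormedAddCommGroup H] [InnerProductSpace ℝ H]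
    (B : Set H) (y : H) : ℝ :=
  sSup { r : ℝ | ∃ x : H, atomNorm B x ≤ 1 ∧ r = ⟪x, y⟫ }

/-!
Put `h = x* - x♮`. Since `x♮` is feasible, minimality gives `‖x*‖_B ≤ ‖x♮‖_B`, which the
compressed-sensing decomposition of `h` turns into the cone bound
`‖h‖_B ≤ 2‖x♮ - a‖_B + 2L‖h‖`; the two Dantzig constraints together give the tube bound
`‖Φh‖² ≤ 2λσ‖h‖_B`. If `‖h‖ ≤ ρ‖h‖_B`, the cone bound alone gives `‖h‖ ≤ C₄‖x♮ - a‖_B`.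
Otherwise the weaken-RIP gives the restricted eigenvalue bound `α̃²‖h‖² ≤ ‖Φh‖²`, and the tube
bound gives `‖h‖ ≤ C₅σ`.

The restricted eigenvalue bound comes from Maurey's empirical method: for `v = ∑ σᵢ bᵢ` with
`t = ∑ σᵢ`, draw `k` atoms independently with probabilities `σᵢ / t`; the sample sum scaled by
`t / k` lies in `A`, and comparing the second moments of its norm before and after `Φ` gives
`α²(t² + (k-1)‖v‖²) ≤ β²t² + (k-1)‖Φv‖²`, hence
`α²(k-1)‖v‖² ≤ (k-1)‖Φv‖² + (β² - α²)‖v‖_B²`.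
-/

theorem Monotone.le_apply_csInf {f : ℝ → ℝ} (hf : Monotone f) (hfc : Continuous f)
    {S : Set ℝ} (hne : S.Nonempty) (hbdd : BddBelow S) {a : ℝ} (h : ∀ r ∈ S, a ≤ f r) :
    a ≤ f (sInf S) := by
  rw [hf.map_csInf_of_continuousAt hfc.continuousAt hne hbdd]
  exact le_csInf (hne.image f) (Set.forall_mem_image.2 h)

section AtomNorm

variable {H : Type*} [AddCommGroup H] [Module ℝ H] {B : Set H} {x y : H} {r s : ℝ}

def atomNormSet (B : Set H) (x : H) : Set ℝ :=
  { r : ℝ | ∃ (S : Finset H) (σ : H → ℝ), ↑S ⊆ B ∧ (∀ b ∈ S, 0 ≤ σ b) ∧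
    x = ∑ b ∈ S, σ b • b ∧ r = ∑ b ∈ S, σ b }

theorem atomNorm_eq_sInf (B : Set H) (x : H) : atomNorm B x = sInf (atomNormSet B x) := rfl

theorem nonneg_of_mem_atomNormSet (hr : r ∈ atomNormSet B x) : 0 ≤ r := by
  obtain ⟨S, σ, -, hσ, -, rfl⟩ := hr
  exact Finset.sum_nonneg hσ

theorem atomNormSet_bddBelow (B : Set H) (x : H) : BddBelow (atomNormSet B x) :=
  ⟨0, fun _ => nonneg_of_mem_atomNormSet⟩

theorem atomNormSet_nonempty (hB : Spans B) (x : H) : (atomNormSet B x).Nonempty := by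
  obtain ⟨S, σ, hS, hσ, hx⟩ := hB x
  exact ⟨_, S, σ, hS, hσ, hx, rfl⟩

theorem atomNorm_le_of_mem (hr : r ∈ atomNormSet B x) : atomNorm B x ≤ r :=
  csInf_le (atomNormSet_bddBelow B x) hr

theorem atomNorm_nonneg (hB : Spans B) (x : H) : 0 ≤ atomNorm B x :=
  le_csInf (atomNormSet_nonempty hB x) fun _ => nonneg_of_mem_atomNormSet

theorem atomNorm_zero_le : atomNorm B (0 : H) ≤ 0 :=
  atomNorm_le_of_mem ⟨∅, 0, by simp⟩

theorem atomNorm_le_one_of_mem {b : H} (hb : b ∈ B) : atomNorm B b ≤ 1 := by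
  classical
  exact atomNorm_le_of_mem ⟨{b}, 1, by simpa using hb, by simp, by simp, by simp⟩

theorem add_mem_atomNormSet (hr : r ∈ atomNormSet B x) (hs : s ∈ atomNormSet B y) :
    r + s ∈ atomNormSet B (x + y) := by
  classical
  obtain ⟨S, σ, hS, hσ, rfl, rfl⟩ := hr
  obtain ⟨T, τ, hT, hτ, rfl, rfl⟩ := hs
  let υ : H → ℝ := fun b => (if b ∈ S then σ b else 0) + (if b ∈ T then τ b else 0)
  refine ⟨S ∪ T, υ, by simpa using Set.union_subset hS hT, fun b _ => ?_, ?_, ?_⟩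
  · exact add_nonneg (by split_ifs with h <;> simp [hσ b, h])
      (by split_ifs with h <;> simp [hτ b, h])
  · simp [υ, add_smul, Finset.sum_add_distrib, ite_smul, Finset.sum_ite_mem]
  · simp [υ, Finset.sum_add_distrib, Finset.sum_ite_mem]

theorem atomNorm_add_le (hB : Spans B) (x y : H) :
    atomNorm B (x + y) ≤ atomNorm B x + atomNorm B y := by
  rw [atomNorm_eq_sInf, atomNorm_eq_sInf, atomNorm_eq_sInf,
    ← csInf_add (atomNormSet_nonempty hB x) (atomNormSet_bddBelow B x)
      (atomNormSet_nonempty hB y) (atomNormSet_bddBelow B y)]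
  exact csInf_le_csInf (atomNormSet_bddBelow B _)
    ((atomNormSet_nonempty hB x).add (atomNormSet_nonempty hB y))
    (Set.add_subset_iff.2 fun _ hr _ hs => add_mem_atomNormSet hr hs)

theorem neg_mem_atomNormSet (hBsym : ∀ b ∈ B, -b ∈ B) (hr : r ∈ atomNormSet B x) :
    r ∈ atomNormSet B (-x) := by
  classical
  obtain ⟨S, σ, hS, hσ, rfl, rfl⟩ := hr
  have hinj : Set.InjOn (fun b : H => -b) S := neg_injective.injOn
  refine ⟨S.image (-·), fun b => σ (-b), ?_, ?_, ?_, ?_⟩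
  · simpa [Set.subset_def] using fun b hb => by simpa using hBsym _ (hS hb)
  · simpa using hσ
  · simp [Finset.sum_image hinj, Finset.sum_neg_distrib]
  · simp [Finset.sum_image hinj]

theorem atomNormSet_neg (hBsym : ∀ b ∈ B, -b ∈ B) (x : H) :
    atomNormSet B (-x) = atomNormSet B x :=
  Set.Subset.antisymm (fun _ hr => by simpa using neg_mem_atomNormSet hBsym hr)
    fun _ => neg_mem_atomNormSet hBsym

theorem atomNorm_neg (hBsym : ∀ b ∈ B, -b ∈ B) (x : H) : atomNorm B (-x) = atomNorm B x := by
  rw [atomNorm_eq_sInf, atomNorm_eq_sInf, atomNormSet_neg hBsym]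

theorem atomNorm_sub_le (hBsym : ∀ b ∈ B, -b ∈ B) (hB : Spans B) (x y : H) :
    atomNorm B (x - y) ≤ atomNorm B x + atomNorm B y := by
  simpa [sub_eq_add_neg, atomNorm_neg hBsym] using atomNorm_add_le hB x (-y)

end AtomNorm

section DualNorm

variable {H : Type*} [NormedAddCommGroup H] [InnerProductSpace ℝ H] {B : Set H}

theorem norm_le_of_mem_atomNormSet (hBunit : ∀ b ∈ B, ‖b‖ = 1) {x : H} {r : ℝ}
    (hr : r ∈ atomNormSet B x) : ‖x‖ ≤ r := by
  obtain ⟨S, σ, hS, hσ, rfl, rfl⟩ := hr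
  refine (norm_sum_le _ _).trans (Finset.sum_le_sum fun b hb => ?_)
  rw [norm_smul, hBunit b (hS hb), mul_one, Real.norm_of_nonneg (hσ b hb)]

theorem norm_le_atomNorm (hB : Spans B) (hBunit : ∀ b ∈ B, ‖b‖ = 1) (x : H) :
    ‖x‖ ≤ atomNorm B x :=
  le_csInf (atomNormSet_nonempty hB x) fun _ => norm_le_of_mem_atomNormSet hBunit

def dualNormSet (B : Set H) (y : H) : Set ℝ := { r : ℝ | ∃ x : H, atomNorm B x ≤ 1 ∧ r = ⟪x, y⟫ }

theorem dualNorm_eq_sSup (B : Set H) (y : H) : dualNorm B y = sSup (dualNormSet B y) := rfl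

theorem dualNormSet_bddAbove (hB : Spans B) (hBunit : ∀ b ∈ B, ‖b‖ = 1) (y : H) :
    BddAbove (dualNormSet B y) := by
  refine ⟨‖y‖, ?_⟩
  rintro _ ⟨x, hx, rfl⟩
  calc ⟪x, y⟫ ≤ ‖x‖ * ‖y‖ := real_inner_le_norm x y
    _ ≤ 1 * ‖y‖ := by gcongr; exact (norm_le_atomNorm hB hBunit x).trans hx
    _ = ‖y‖ := one_mul _

theorem inner_le_dualNorm (hB : Spans B) (hBunit : ∀ b ∈ B, ‖b‖ = 1) {x : H}
    (hx : atomNorm B x ≤ 1) (y : H) : ⟪x, y⟫ ≤ dualNorm B y :=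
  le_csSup (dualNormSet_bddAbove hB hBunit y) ⟨x, hx, rfl⟩

theorem dualNorm_nonneg (hB : Spans B) (hBunit : ∀ b ∈ B, ‖b‖ = 1) (y : H) :
    0 ≤ dualNorm B y := by
  simpa using inner_le_dualNorm hB hBunit (atomNorm_zero_le.trans zero_le_one) y

theorem inner_le_atomNorm_mul_dualNorm (hB : Spans B) (hBunit : ∀ b ∈ B, ‖b‖ = 1) (x y : H) :
    ⟪x, y⟫ ≤ atomNorm B x * dualNorm B y := by
  have hy := dualNorm_nonneg hB hBunit y
  refine Monotone.le_apply_csInf (fun _ _ h => mul_le_mul_of_nonneg_right h hy)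
    (by fun_prop) (atomNormSet_nonempty hB x) (atomNormSet_bddBelow B x) ?_
  rintro _ ⟨S, σ, hS, hσ, rfl, rfl⟩
  rw [sum_inner, Finset.sum_mul]
  refine Finset.sum_le_sum fun b hb => ?_
  rw [real_inner_smul_left]
  exact mul_le_mul_of_nonneg_left
    (inner_le_dualNorm hB hBunit (atomNorm_le_one_of_mem (hS hb)) y) (hσ b hb)

theorem dualNorm_neg (hBsym : ∀ b ∈ B, -b ∈ B) (y : H) : dualNorm B (-y) = dualNorm B y := by
  have hset : ∀ z : H, dualNormSet B (-z) ⊆ dualNormSet B z := by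
    rintro z _ ⟨x, hx, rfl⟩
    exact ⟨-x, by rwa [atomNorm_neg hBsym], by rw [inner_neg_left, inner_neg_right]⟩
  rw [dualNorm_eq_sSup, dualNorm_eq_sSup,
    (hset y).antisymm (by simpa using hset (-y))]

theorem dualNorm_add_le (hB : Spans B) (hBunit : ∀ b ∈ B, ‖b‖ = 1) (y z : H) :
    dualNorm B (y + z) ≤ dualNorm B y + dualNorm B z := by
  refine csSup_le ⟨0, 0, atomNorm_zero_le.trans zero_le_one, by simp⟩ ?_
  rintro _ ⟨x, hx, rfl⟩
  rw [inner_add_right]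
  exact add_le_add (inner_le_dualNorm hB hBunit hx y) (inner_le_dualNorm hB hBunit hx z)

theorem dualNorm_sub_le (hBsym : ∀ b ∈ B, -b ∈ B) (hB : Spans B) (hBunit : ∀ b ∈ B, ‖b‖ = 1)
    (y z : H) : dualNorm B (y - z) ≤ dualNorm B y + dualNorm B z := by
  simpa [sub_eq_add_neg, dualNorm_neg hBsym] using dualNorm_add_le hB hBunit y (-z)

end DualNorm

section Sampling
variable {ι : Type*} [Fintype ι] {k : ℕ} (p : ι → ℝ)

theorem sum_pi_prod_mul_prod (c : Fin k → ι → ℝ) :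
    ∑ g : Fin k → ι, (∏ l, p (g l)) * ∏ l, c l (g l) = ∏ l, ∑ i, p i * c l i := by
  rw [Fintype.prod_sum]
  simp only [Finset.prod_mul_distrib]

variable {p}

theorem sum_pi_prod_mul_apply_mul_apply (hp : ∑ i, p i = 1) {j j' : Fin k} (hj : j ≠ j')
    (c d : ι → ℝ) :
    ∑ g : Fin k → ι, (∏ l, p (g l)) * (c (g j) * d (g j')) =
      (∑ i, p i * c i) * ∑ i, p i * d i := by
  have := sum_pi_prod_mul_prod p fun l i =>
    (if l = j then c i else 1) * (if l = j' then d i else 1)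
  simp only [Finset.prod_mul_distrib, Finset.prod_ite_eq', Finset.mem_univ, if_true] at this
  rw [this]
  calc _ = ∏ l, (if l = j then ∑ i, p i * c i else 1) *
          (if l = j' then ∑ i, p i * d i else 1) := by
        refine Finset.prod_congr rfl fun l _ => ?_
        by_cases hl : l = j
        · subst hl; simp [hj]
        · by_cases hl' : l = j' <;> simp [hl, hl', hp, hj.symm]
    _ = _ := by
      rw [Finset.prod_mul_distrib, Finset.prod_ite_eq', Finset.prod_ite_eq']
      simp

theorem sum_pi_prod_mul_apply_apply (hp : ∑ i, p i = 1) {j j' : Fin k} (hj : j ≠ j')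
    (F : ι → ι → ℝ) :
    ∑ g : Fin k → ι, (∏ l, p (g l)) * F (g j) (g j') = ∑ i, ∑ i', p i * p i' * F i i' := by
  classical
  have hF : ∀ g : Fin k → ι, (∏ l, p (g l)) * F (g j) (g j') =
      ∑ i, (∏ l, p (g l)) * ((if g j = i then 1 else 0) * F i (g j')) := fun g => by
    simp
  rw [Finset.sum_congr rfl fun g _ => hF g, Finset.sum_comm]
  refine Finset.sum_congr rfl fun i _ => ?_
  rw [sum_pi_prod_mul_apply_mul_apply hp hj (fun a => if a = i then 1 else 0) (F i)]
  simp [Finset.mul_sum, mul_assoc]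

theorem sum_pi_prod_mul_apply (hp : ∑ i, p i = 1) (j : Fin k) (c : ι → ℝ) :
    ∑ g : Fin k → ι, (∏ l, p (g l)) * c (g j) = ∑ i, p i * c i := by
  have := sum_pi_prod_mul_prod p fun l i => if l = j then c i else 1
  simpa [Finset.prod_ite_eq', mul_ite, Finset.sum_ite_irrel, hp] using this

theorem sum_pi_prod_mul_norm_sum_sq {E : Type*} [NormedAddCommGroup E] [InnerProductSpace ℝ E]
    (hp : ∑ i, p i = 1) (f : ι → E) :
    ∑ g : Fin k → ι, (∏ l, p (g l)) * ‖∑ j, f (g j)‖ ^ 2 =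
      k * ∑ i, p i * ‖f i‖ ^ 2 + k * (k - 1) * ‖∑ i, p i • f i‖ ^ 2 := by
  have hpair : ∀ j j' : Fin k, ∑ g : Fin k → ι, (∏ l, p (g l)) * ⟪f (g j), f (g j')⟫ =
      (if j = j' then ∑ i, p i * ‖f i‖ ^ 2 - ‖∑ i, p i • f i‖ ^ 2 else 0) +
        ‖∑ i, p i • f i‖ ^ 2 := by
    intro j j'
    split_ifs with hj
    · subst hj
      simp_rw [real_inner_self_eq_norm_sq, sub_add_cancel]
      exact sum_pi_prod_mul_apply hp j (fun i => ‖f i‖ ^ 2)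
    · refine (sum_pi_prod_mul_apply_apply hp hj (fun a b => ⟪f a, f b⟫)).trans ?_
      rw [zero_add, ← real_inner_self_eq_norm_sq, sum_inner]
      simp_rw [inner_sum, real_inner_smul_left, real_inner_smul_right, mul_assoc]
  calc ∑ g : Fin k → ι, (∏ l, p (g l)) * ‖∑ j, f (g j)‖ ^ 2
      = ∑ j, ∑ j', ∑ g : Fin k → ι, (∏ l, p (g l)) * ⟪f (g j), f (g j')⟫ := by
        simp_rw [← real_inner_self_eq_norm_sq, sum_inner, inner_sum, Finset.mul_sum]
        rw [Finset.sum_comm]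
        exact Finset.sum_congr rfl fun j _ => Finset.sum_comm
    _ = _ := by
        simp only [hpair, Finset.sum_add_distrib, Finset.sum_ite_eq, Finset.mem_univ, if_true,
          Finset.sum_const, Finset.card_univ, Fintype.card_fin, nsmul_eq_mul]
        ring

end Sampling

section WeakenRIP

variable {H F : Type*} [NormedAddCommGroup H] [InnerProductSpace ℝ H]
  [NormedAddCommGroup F] [InnerProductSpace ℝ F] {B : Set H} {k : ℕ} {α β : ℝ}
  {Φ : H →ₗ[ℝ] F}

theorem sq_mul_sampling_moment_le (hα : 0 ≤ α)
    (hRIPa : ∀ u ∈ simpleSet B k, α * ‖u‖ ≤ ‖Φ u‖) {ι : Type*} [Fintype ι] {p : ι → ℝ}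
    (hp0 : ∀ i, 0 ≤ p i) (hp : ∑ i, p i = 1) (f : ι → H)
    (hf : ∀ g : Fin k → ι, ∑ j, f (g j) ∈ simpleSet B k) :
    α ^ 2 * (k * ∑ i, p i * ‖f i‖ ^ 2 + k * (k - 1) * ‖∑ i, p i • f i‖ ^ 2) ≤
      k * ∑ i, p i * ‖Φ (f i)‖ ^ 2 + k * (k - 1) * ‖Φ (∑ i, p i • f i)‖ ^ 2 := by
  have hΦf : Φ (∑ i, p i • f i) = ∑ i, p i • Φ (f i) := by simp
  rw [hΦf, ← sum_pi_prod_mul_norm_sum_sq hp, ← sum_pi_prod_mul_norm_sum_sq hp, Finset.mul_sum]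
  refine Finset.sum_le_sum fun g _ => ?_
  rw [mul_left_comm, ← map_sum, ← mul_pow]
  exact mul_le_mul_of_nonneg_left (pow_le_pow_left₀ (by positivity) (hRIPa _ (hf g)) 2)
    (Finset.prod_nonneg fun l _ => hp0 (g l))

theorem sq_mul_sq_add_norm_sq_le (hBunit : ∀ b ∈ B, ‖b‖ = 1) (hk : 0 < k) (hα : 0 ≤ α)
    (hRIPa : ∀ u ∈ simpleSet B k, α * ‖u‖ ≤ ‖Φ u‖) (hRIPb : ∀ b ∈ B, ‖Φ b‖ ≤ β)
    {ι : Type*} [Fintype ι] (b : ι → H) (hb : ∀ i, b i ∈ B) (σ : ι → ℝ) (hσ : ∀ i, 0 ≤ σ i) :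
    α ^ 2 * ((∑ i, σ i) ^ 2 + (k - 1) * ‖∑ i, σ i • b i‖ ^ 2) ≤
      β ^ 2 * (∑ i, σ i) ^ 2 + (k - 1) * ‖Φ (∑ i, σ i • b i)‖ ^ 2 := by
  set t := ∑ i, σ i
  set v := ∑ i, σ i • b i
  rcases (Finset.sum_nonneg fun i _ => hσ i : 0 ≤ t).eq_or_lt with ht | ht
  · have hσ0 : ∀ i, σ i = 0 := fun i =>
      (Finset.sum_eq_zero_iff_of_nonneg fun i _ => hσ i).1 ht.symm i (Finset.mem_univ i)
    simp [t, v, hσ0]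
  have hK : (0 : ℝ) < k := Nat.cast_pos.2 hk
  let p : ι → ℝ := fun i => σ i / t
  let f : ι → H := fun i => (t / k) • b i
  have hp0 : ∀ i, 0 ≤ p i := fun i => div_nonneg (hσ i) ht.le
  have hp : ∑ i, p i = 1 := by rw [← Finset.sum_div, div_self ht.ne']
  have hf : ∀ g : Fin k → ι, ∑ j, f (g j) ∈ simpleSet B k := fun g =>
    ⟨fun _ => t / k, fun j => b (g j), fun _ => by positivity, fun j => hb (g j), rfl⟩
  have hpf : ∑ i, p i • f i = (k : ℝ)⁻¹ • v := by
    simp only [p, f, v, Finset.smul_sum, smul_smul]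
    refine Finset.sum_congr rfl fun i _ => ?_
    congr 1
    field_simp
    exact mul_div_cancel_right₀ _ ht.ne'
  have hfnorm : ∑ i, p i * ‖f i‖ ^ 2 = (t / k) ^ 2 := by
    simp only [f, norm_smul, hBunit _ (hb _), Real.norm_of_nonneg (by positivity : 0 ≤ t / k),
      mul_one, ← Finset.sum_mul, hp, one_mul]
  have hΦfnorm : ∑ i, p i * ‖Φ (f i)‖ ^ 2 ≤ (t / k) ^ 2 * β ^ 2 := by
    calc ∑ i, p i * ‖Φ (f i)‖ ^ 2 ≤ ∑ i, p i * ((t / k) ^ 2 * β ^ 2) := by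
          refine Finset.sum_le_sum fun i _ => mul_le_mul_of_nonneg_left ?_ (hp0 i)
          rw [map_smul, norm_smul, Real.norm_of_nonneg (by positivity), mul_pow]
          gcongr
          exact hRIPb _ (hb i)
      _ = (t / k) ^ 2 * β ^ 2 := by rw [← Finset.sum_mul, hp, one_mul]
  have key := sq_mul_sampling_moment_le hα hRIPa hp0 hp f hf
  rw [hfnorm, hpf, map_smul, norm_smul, norm_smul, Real.norm_of_nonneg (by positivity)] at key
  have := key.trans (add_le_add (mul_le_mul_of_nonneg_left hΦfnorm hK.le) le_rfl)
  field_simp at this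
  linarith

theorem mul_norm_sq_le_of_weakenRIP (hB : Spans B) (hBunit : ∀ b ∈ B, ‖b‖ = 1) (hk : 0 < k)
    (hα : 0 ≤ α) (hαβ : α ≤ β) (hRIPa : ∀ u ∈ simpleSet B k, α * ‖u‖ ≤ ‖Φ u‖)
    (hRIPb : ∀ b ∈ B, ‖Φ b‖ ≤ β) (v : H) :
    α ^ 2 * (k - 1) * ‖v‖ ^ 2 ≤ (k - 1) * ‖Φ v‖ ^ 2 + (β ^ 2 - α ^ 2) * atomNorm B v ^ 2 := by
  have hc : 0 ≤ β ^ 2 - α ^ 2 := sub_nonneg.2 (pow_le_pow_left₀ hα hαβ 2)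
  -- `max r 0` makes the bound monotone in `r`; atomic costs are nonnegative anyway
  have key := Monotone.le_apply_csInf
    (f := fun r => (k - 1) * ‖Φ v‖ ^ 2 + (β ^ 2 - α ^ 2) * max r 0 ^ 2)
    (fun r s h => by dsimp only; gcongr) (by fun_prop)
    (atomNormSet_nonempty hB v) (atomNormSet_bddBelow B v) (a := α ^ 2 * (k - 1) * ‖v‖ ^ 2) ?_
  · rwa [← atomNorm_eq_sInf, max_eq_left (atomNorm_nonneg hB v)] at key
  rintro _ ⟨S, σ, hS, hσ, rfl, rfl⟩
  have := sq_mul_sq_add_norm_sq_le hBunit hk hα hRIPa hRIPb (fun b : S => (b : H))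
    (fun b => hS b.2) (fun b => σ b) (fun b => hσ b b.2)
  rw [Finset.sum_coe_sort S σ, Finset.sum_coe_sort S (fun b => σ b • b)] at this
  rw [max_eq_left (Finset.sum_nonneg hσ)]
  linarith

theorem sub_div_mul_norm_sq_le_of_weakenRIP (hB : Spans B) (hBunit : ∀ b ∈ B, ‖b‖ = 1)
    (hk : 1 < k) (hα : 0 ≤ α) (hαβ : α ≤ β) (hRIPa : ∀ u ∈ simpleSet B k, α * ‖u‖ ≤ ‖Φ u‖)
    (hRIPb : ∀ b ∈ B, ‖Φ b‖ ≤ β) {ρ : ℝ} (hρ : 0 < ρ) {v : H} (hv : ρ * atomNorm B v ≤ ‖v‖) :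
    (α ^ 2 - (β ^ 2 - α ^ 2) / (ρ ^ 2 * (k - 1))) * ‖v‖ ^ 2 ≤ ‖Φ v‖ ^ 2 := by
  have hk' : (0 : ℝ) < k - 1 := sub_pos.2 (by exact_mod_cast hk)
  have key := mul_norm_sq_le_of_weakenRIP hB hBunit (by omega) hα hαβ hRIPa hRIPb v
  have hcone : (β ^ 2 - α ^ 2) * (ρ * atomNorm B v) ^ 2 ≤ (β ^ 2 - α ^ 2) * ‖v‖ ^ 2 := by
    have := atomNorm_nonneg hB v
    have : 0 ≤ β ^ 2 - α ^ 2 := sub_nonneg.2 (pow_le_pow_left₀ hα hαβ 2)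
    gcongr
  rw [sub_mul, div_mul_eq_mul_div, sub_le_iff_le_add, ← sub_le_iff_le_add',
    le_div_iff₀ (by positivity)]
  nlinarith

theorem norm_apply_sub_sq_le [FiniteDimensional ℝ H] [FiniteDimensional ℝ F]
    (hBsym : ∀ b ∈ B, -b ∈ B) (hB : Spans B) (hBunit : ∀ b ∈ B, ‖b‖ = 1) (Φ : H →ₗ[ℝ] F)
    (x x' : H) (y : F) :
    ‖Φ (x - x')‖ ^ 2 ≤ atomNorm B (x - x') *
      (dualNorm B (LinearMap.adjoint Φ (Φ x - y)) +
        dualNorm B (LinearMap.adjoint Φ (Φ x' - y))) := by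
  have hsplit : LinearMap.adjoint Φ (Φ (x - x')) =
      LinearMap.adjoint Φ (Φ x - y) - LinearMap.adjoint Φ (Φ x' - y) := by
    rw [← map_sub, map_sub, sub_sub_sub_cancel_right]
  calc ‖Φ (x - x')‖ ^ 2 = ⟪x - x', LinearMap.adjoint Φ (Φ (x - x'))⟫ := by
        rw [LinearMap.adjoint_inner_right, real_inner_self_eq_norm_sq]
    _ ≤ atomNorm B (x - x') * dualNorm B (LinearMap.adjoint Φ (Φ (x - x'))) :=
        inner_le_atomNorm_mul_dualNorm hB hBunit _ _
    _ ≤ _ := by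
        rw [hsplit]
        exact mul_le_mul_of_nonneg_left (dualNorm_sub_le hBsym hB hBunit _ _)
          (atomNorm_nonneg hB _)

end WeakenRIP

theorem atomNorm_sub_le_of_isCSSpace {H : Type*} [NormedAddCommGroup H] [InnerProductSpace ℝ H]
    {B A : Set H} {L : ℝ} (hBsym : ∀ b ∈ B, -b ∈ B) (hB : Spans B) (hCS : IsCSSpace B A L)
    {a x y : H} (ha : a ∈ A) (hxy : atomNorm B x ≤ atomNorm B y) :
    atomNorm B (x - y) ≤ 2 * atomNorm B (y - a) + 2 * L * ‖x - y‖ := by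
  obtain ⟨z₁, z₂, hz, hz₁, hz₂⟩ := hCS.2 a ha (x - y)
  have h₁ : atomNorm B (a + z₁) ≤ atomNorm B x + atomNorm B z₂ + atomNorm B (y - a) := by
    have : a + z₁ = x - z₂ - (y - a) := by rw [eq_sub_of_add_eq hz.symm]; abel
    rw [this]
    linarith [atomNorm_sub_le hBsym hB (x - z₂) (y - a), atomNorm_sub_le hBsym hB x z₂]
  have h₂ : atomNorm B y ≤ atomNorm B (y - a) + atomNorm B a := by
    simpa using atomNorm_add_le hB (y - a) a
  have h₃ : atomNorm B (x - y) ≤ atomNorm B z₁ + atomNorm B z₂ := hz ▸ atomNorm_add_le hB _ _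
  linarith

theorem le_inv_sub_mul_of_le_mul {ρ L n N E : ℝ} (hρ : 0 < ρ) (hρL : 0 < 1 / (2 * ρ) - L)
    (hn : n ≤ ρ * N) (hN : N ≤ 2 * E + 2 * L * n) : n ≤ (1 / (2 * ρ) - L)⁻¹ * E := by
  have : n / (2 * ρ) ≤ E + L * n := by
    rw [div_le_iff₀ (by positivity)]
    nlinarith
  rw [le_inv_mul_iff₀ hρL, sub_mul, one_div_mul_eq_div]
  linarith

theorem le_div_of_mul_sq_le {c ρ n N ε : ℝ} (hc : 0 < c) (hρ : 0 < ρ) (hN : 0 ≤ N)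
    (hε : 0 ≤ ε) (h : c * n ^ 2 ≤ N * ε) (hn : ρ * N < n) : n ≤ ε / (c * ρ) := by
  have hn0 : 0 < n := (mul_nonneg hρ.le hN).trans_lt hn
  have : n * (n * (c * ρ)) ≤ n * ε := by nlinarith
  rw [le_div_iff₀ (by positivity)]
  exact le_of_mul_le_mul_left this hn0

theorem sub_div_pos_of_sqrt_div_lt {α β ρ K : ℝ} (hα : 0 < α) (hK : 0 < K) (hρ : 0 < ρ)
    (h : √((β ^ 2 - α ^ 2) / (α ^ 2 * K)) < ρ) : 0 < α ^ 2 - (β ^ 2 - α ^ 2) / (ρ ^ 2 * K) := by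
  rw [Real.sqrt_lt' hρ, div_lt_iff₀ (by positivity)] at h
  rw [sub_pos, div_lt_iff₀ (by positivity)]
  linarith

theorem weakenRIP_stable_robust_dantzig_general
    {H : Type*} [NormedAddCommGroup H] [InnerProductSpace ℝ H] [FiniteDimensional ℝ H]
    {m : ℕ} (B : Set H)
    (hBsym : ∀ b ∈ B, -b ∈ B) (hBspan : Spans B) (hBunit : ∀ b ∈ B, ‖b‖ = 1)
    (k : ℕ) (hk : 1 < k) (L : ℝ) (hL : 0 < L)
    (hCS : IsCSSpace B (simpleSet B k) L)
    (α β : ℝ) (hα : 0 < α) (hαβ : α ≤ β)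
    (Φ : H →ₗ[ℝ] EuclideanSpace ℝ (Fin m))
    (hRIPa : ∀ u ∈ simpleSet B k, α * ‖u‖ ≤ ‖Φ u‖)
    (hRIPb : ∀ b ∈ B, ‖Φ b‖ ≤ β)
    (lam σ ρ : ℝ) (hlam : 0 < lam) (hσ : 0 < σ)
    (hρ1 : Real.sqrt ((β ^ 2 - α ^ 2) / (α ^ 2 * ((k : ℝ) - 1))) < ρ)
    (hρ2 : ρ < 1 / (2 * L))
    (xnat : H) (w : EuclideanSpace ℝ (Fin m))
    (hw : dualNorm B ((LinearMap.adjoint Φ) w) ≤ lam * σ)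
    (xstar : H)
    (hfeas : dualNorm B ((LinearMap.adjoint Φ) (Φ xstar - (Φ xnat + w))) ≤ lam * σ)
    (hmin : ∀ x : H,
      dualNorm B ((LinearMap.adjoint Φ) (Φ x - (Φ xnat + w))) ≤ lam * σ →
      atomNorm B xstar ≤ atomNorm B x) :
    ∀ a ∈ simpleSet B k,
      ‖xstar - xnat‖ ≤
        (1 / (2 * ρ) - L)⁻¹ * atomNorm B (xnat - a)
        + (2 * lam /
            ((α ^ 2 - (β ^ 2 - α ^ 2) / (ρ ^ 2 * ((k : ℝ) - 1))) * ρ)) * σ := by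
  intro a ha
  have hρ : 0 < ρ := (Real.sqrt_nonneg _).trans_lt hρ1
  have hk' : (0 : ℝ) < k - 1 := sub_pos.2 (by exact_mod_cast hk)
  have hC₄ : 0 < 1 / (2 * ρ) - L := by
    rw [lt_div_iff₀ (by positivity)] at hρ2
    rw [sub_pos, lt_div_iff₀ (by positivity)]
    linarith
  have hα' := sub_div_pos_of_sqrt_div_lt hα hk' hρ hρ1
  have hnat : dualNorm B (LinearMap.adjoint Φ (Φ xnat - (Φ xnat + w))) ≤ lam * σ := by
    rwa [sub_add_cancel_left, map_neg, dualNorm_neg hBsym]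
  have hcone := atomNorm_sub_le_of_isCSSpace hBsym hBspan hCS ha (hmin xnat hnat)
  have htube := (norm_apply_sub_sq_le hBsym hBspan hBunit Φ xstar xnat (Φ xnat + w)).trans
    (mul_le_mul_of_nonneg_left (add_le_add hfeas hnat) (atomNorm_nonneg hBspan _))
  have hE := atomNorm_nonneg hBspan (xnat - a)
  rcases le_or_gt ‖xstar - xnat‖ (ρ * atomNorm B (xstar - xnat)) with hsmall | hlarge
  · have := le_inv_sub_mul_of_le_mul hρ hC₄ hsmall hcone
    have : 0 ≤ 2 * lam / ((α ^ 2 - (β ^ 2 - α ^ 2) / (ρ ^ 2 * (k - 1))) * ρ) * σ := by positivity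
    linarith
  · have heig := (sub_div_mul_norm_sq_le_of_weakenRIP hBspan hBunit hk hα.le hαβ hRIPa hRIPb hρ
      hlarge.le).trans htube
    have := le_div_of_mul_sq_le hα' hρ (atomNorm_nonneg hBspan _) (by positivity) heig hlarge
    have : 0 ≤ (1 / (2 * ρ) - L)⁻¹ * atomNorm B (xnat - a) := by positivity
    rw [div_mul_eq_mul_div, show 2 * lam * σ = lam * σ + lam * σ by ring]
    linarith

/-- Weaken-RIP implies stable and robust recovery via the Dantzig selector. -/
theorem weakenRIP_stable_robust_dantzig
    {H : Type*} [NormedAddCommGroup H] [InnerProductSpace ℝ H] [FiniteDimensional ℝ H]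
    {m : ℕ} (B : Set H)
    (hBsym : ∀ b ∈ B, -b ∈ B) (hBspan : Spans B) (hBunit : ∀ b ∈ B, ‖b‖ = 1)
    (k : ℕ) (hk : 1 < k) (L : ℝ) (hL : 0 < L)
    (hCS : IsCSSpace B (simpleSet B k) L)
    (α β : ℝ) (hα : 0 < α) (hβ : 0 < β) (hαβ : α ≤ β)
    (Φ : H →ₗ[ℝ] EuclideanSpace ℝ (Fin m))
    (hRIPa : ∀ u ∈ simpleSet B k, α * ‖u‖ ≤ ‖Φ u‖)
    (hRIPb : ∀ b ∈ B, ‖Φ b‖ ≤ β)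
    (lam σ ρ : ℝ) (hlam : 0 < lam) (hσ : 0 < σ)
    (hρ1 : Real.sqrt ((β ^ 2 - α ^ 2) / (α ^ 2 * ((k : ℝ) - 1))) < ρ)
    (hρ2 : ρ < 1 / (2 * L))
    (xnat : H) (w : EuclideanSpace ℝ (Fin m))
    (hw : dualNorm B ((LinearMap.adjoint Φ) w) ≤ lam * σ)
    (xstar : H)
    (hfeas : dualNorm B ((LinearMap.adjoint Φ) (Φ xstar - (Φ xnat + w))) ≤ lam * σ)
    (hmin : ∀ x : H,
      dualNorm B ((LinearMap.adjoint Φ) (Φ x - (Φ xnat + w))) ≤ lam * σ →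
      atomNorm B xstar ≤ atomNorm B x) :
    ∀ a ∈ simpleSet B k,
      ‖xstar - xnat‖ ≤
        (1 / (2 * ρ) - L)⁻¹ * atomNorm B (xnat - a)
        + (2 * lam /
            ((α ^ 2 - (β ^ 2 - α ^ 2) / (ρ ^ 2 * ((k : ℝ) - 1))) * ρ)) * σ :=
  weakenRIP_stable_robust_dantzig_general B hBsym hBspan hBunit k hk L hL hCS α β hα hαβ Φ hRIPa
    hRIPb lam σ ρ hlam hσ hρ1 hρ2 xnat w hw xstar hfeas hmin
end
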